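/- Under the hypotheses and iteration of the main theorem — H a real Hilbert space, C ⊆ H nonempty closed convex, F : C × C → ℝ satisfying (A1)–(A4), B : C → H α-inverse-strongly monotone, (T_i) nonexpansive self-maps of C with 𝔽 := (⋂_{i=1}^∞ Fix(T_i)) ∩ VI(B,C) ∩ EP(F) ≠ ∅, A strongly positive bounded linear self-adjoint with coefficient γ̄ > 0, f a ρ-contraction with γρ < γ̄ for some γ > 0, (W_n) the W-mappings for parameters μ_i ∈ (0,1), (α_n), (λ_n) ⊂ [0,1], (γ_n) ⊂ (0,2α), (r_n) ⊂ (0,∞), (β_n) ⊂ [0,1] with β_n ≤ ‖A‖⁻¹ for all n, and x_1 ∈ C, u_n the unique point with F(u_n,y) + (1/r_n)⟨y − u_n, u_n − x_n⟩ ≥ 0 for all y ∈ C, z_n = λ_n u_n + (1−λ_n) W_n u_n, y_n = β_n γ f(z_n) + (I − β_n A) P_C(z_n − γ_n B z_n), x_{n+1} = α_n x_n + (1−α_n) y_n — the iterates satisfy, for every p ∈ 𝔽 and every n ≥ 1, ‖x_n − p‖ ≤ max{ ‖x_1 − p‖, ‖γ f(p) − A p‖/(γ̄ − γρ) }; in particular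 the sequences (x_n), (u_n), (z_n), (y_n) are bounded. -/

import Mathlib

/-!
Fix `p ∈ 𝔽`. Every stage of the iteration moves points no farther from `p`: the resolvent of
`F` is firmly nonexpansive towards the equilibrium point `p`; the `W`-mapping is built from convex
combinations of nonexpansive maps fixing `p`; and `P_C (I - γₙ B)` is nonexpansive for
`γₙ ≤ 2α` and fixes `p` because `p ∈ VI(B, C)`. Hence `‖zₙ - p‖ ≤ ‖uₙ - p‖ ≤ ‖xₙ - p‖`.
Since `‖I - βₙ A‖ ≤ 1 - βₙ γ̄` for a strongly positive `A` and `βₙ ≤ ‖A‖⁻¹`, the viscosity step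
gives, with `Δ = γ̄ - γρ` and `K = ‖γ f p - A p‖ / Δ`,
`‖yₙ - p‖ ≤ (1 - βₙ Δ) ‖xₙ - p‖ + βₙ Δ K`, and `xₙ₊₁` is a convex combination of `xₙ` and `yₙ`.
Both right-hand sides are convex combinations, so `max ‖x₁ - p‖ K` bounds `‖xₙ - p‖` by induction.
-/

open Filter Topology
open scoped RealInnerProductSpace

/-- The mappings `U n k` of Shimoji–Takahashi: `U n k = I` for `k ≥ n+1` and
`U n k = μ k • T k ∘ U n (k+1) + (1 - μ k) • I` for `k ≤ n`. -/
noncomputable def Umap {H : Type*} [AddCommGroup H] [Module ℝ H]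
    (T : ℕ → H → H) (μ : ℕ → ℝ) (n k : ℕ) (x : H) : H :=
  if n + 1 ≤ k then x
  else μ k • T k (Umap T μ n (k + 1) x) + (1 - μ k) • x
termination_by n + 1 - k
decreasing_by omega

/-- The `W`-mapping `W n = U n 1` generated by `T 1, T 2, …` and `μ 1, μ 2, …`. -/
noncomputable def Wmap {H : Type*} [AddCommGroup H] [Module ℝ H]
    (T : ℕ → H → H) (μ : ℕ → ℝ) (n : ℕ) (x : H) : H :=
  Umap T μ n 1 x

section Wmapping

variable {E : Type*} [AddCommGroup E] [Module ℝ E] {C : Set E} {T : ℕ → E → E} {μ : ℕ → ℝ}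

lemma Umap_of_lt {n k : ℕ} (h : n < k) (x : E) : Umap T μ n k x = x := by
  rw [Umap, if_pos (Nat.succ_le_of_lt h)]

lemma Umap_of_le {n k : ℕ} (h : k ≤ n) (x : E) :
    Umap T μ n k x = μ k • T k (Umap T μ n (k + 1) x) + (1 - μ k) • x := by
  rw [Umap, if_neg (by omega)]

lemma Umap_apply_of_forall_apply_eq {p : E} (hp : ∀ i, 1 ≤ i → T i p = p) (n k : ℕ)
    (hk : 1 ≤ k) : Umap T μ n k p = p := by
  rcases lt_or_ge n k with h | h
  · exact Umap_of_lt h p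
  · rw [Umap_of_le h, Umap_apply_of_forall_apply_eq hp n (k + 1) (by omega), hp k hk,
      Convex.combo_self (add_sub_cancel _ _)]
termination_by n + 1 - k
decreasing_by omega

lemma Umap_mapsTo (hC : Convex ℝ C) (hT : ∀ i, 1 ≤ i → Set.MapsTo (T i) C C)
    (hμ : ∀ i, 1 ≤ i → μ i ∈ Set.Icc (0 : ℝ) 1) (n k : ℕ) (hk : 1 ≤ k) :
    Set.MapsTo (Umap T μ n k) C C := by
  intro x hx
  rcases lt_or_ge n k with h | h
  · rwa [Umap_of_lt h]
  · rw [Umap_of_le h]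
    have hμk := hμ k hk
    exact hC (hT k hk (Umap_mapsTo hC hT hμ n (k + 1) (by omega) hx)) hx hμk.1
      (sub_nonneg.2 hμk.2) (add_sub_cancel _ _)
termination_by n + 1 - k
decreasing_by omega

lemma combo_Wmap_mem (hC : Convex ℝ C) (hTC : ∀ i, 1 ≤ i → Set.MapsTo (T i) C C)
    (hμ : ∀ i, 1 ≤ i → μ i ∈ Set.Icc (0 : ℝ) 1) (n : ℕ) {a : ℝ} (ha : a ∈ Set.Icc (0 : ℝ) 1)
    {u : E} (hu : u ∈ C) : a • u + (1 - a) • Wmap T μ n u ∈ C :=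
  hC hu (Umap_mapsTo hC hTC hμ n 1 le_rfl hu) ha.1 (sub_nonneg.2 ha.2) (add_sub_cancel _ _)

end Wmapping

section Normed

variable {E : Type*} [SeminormedAddCommGroup E] [NormedSpace ℝ E]

lemma norm_combo_sub_combo_le {a : ℝ} (ha : a ∈ Set.Icc (0 : ℝ) 1) (x y x' y' : E) :
    ‖(a • x + (1 - a) • y) - (a • x' + (1 - a) • y')‖
      ≤ a * ‖x - x'‖ + (1 - a) * ‖y - y'‖ := by
  have e : (a • x + (1 - a) • y) - (a • x' + (1 - a) • y')
      = a • (x - x') + (1 - a) • (y - y') := by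
    module
  rw [e, ← norm_smul_of_nonneg ha.1, ← norm_smul_of_nonneg (sub_nonneg.2 ha.2)]
  exact norm_add_le _ _

lemma norm_combo_sub_le {a : ℝ} (ha : a ∈ Set.Icc (0 : ℝ) 1) (x y p : E) :
    ‖(a • x + (1 - a) • y) - p‖ ≤ a * ‖x - p‖ + (1 - a) * ‖y - p‖ := by
  simpa only [Convex.combo_self (add_sub_cancel a 1)] using norm_combo_sub_combo_le ha x y p p

variable {C : Set E} {T : ℕ → E → E} {μ : ℕ → ℝ}

lemma Umap_nonexpansive (hC : Convex ℝ C) (hTC : ∀ i, 1 ≤ i → Set.MapsTo (T i) C C)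
    (hT : ∀ i, 1 ≤ i → ∀ x ∈ C, ∀ y ∈ C, ‖T i x - T i y‖ ≤ ‖x - y‖)
    (hμ : ∀ i, 1 ≤ i → μ i ∈ Set.Icc (0 : ℝ) 1) (n k : ℕ) (hk : 1 ≤ k)
    {x y : E} (hx : x ∈ C) (hy : y ∈ C) :
    ‖Umap T μ n k x - Umap T μ n k y‖ ≤ ‖x - y‖ := by
  rcases lt_or_ge n k with h | h
  · rw [Umap_of_lt h, Umap_of_lt h]
  · rw [Umap_of_le h, Umap_of_le h]
    have hμk := hμ k hk
    have hU := Umap_mapsTo hC hTC hμ n (k + 1) (by omega)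
    calc _ ≤ μ k * ‖T k (Umap T μ n (k + 1) x) - T k (Umap T μ n (k + 1) y)‖
          + (1 - μ k) * ‖x - y‖ := norm_combo_sub_combo_le hμk _ _ _ _
      _ ≤ μ k * ‖x - y‖ + (1 - μ k) * ‖x - y‖ := by
          gcongr
          · exact hμk.1
          · exact (hT k hk _ (hU hx) _ (hU hy)).trans
              (Umap_nonexpansive hC hTC hT hμ n (k + 1) (by omega) hx hy)
      _ = ‖x - y‖ := by ring
termination_by n + 1 - k
decreasing_by omega

lemma norm_combo_Wmap_sub_le (hC : Convex ℝ C) (hTC : ∀ i, 1 ≤ i → Set.MapsTo (T i) C C)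
    (hT : ∀ i, 1 ≤ i → ∀ x ∈ C, ∀ y ∈ C, ‖T i x - T i y‖ ≤ ‖x - y‖)
    (hμ : ∀ i, 1 ≤ i → μ i ∈ Set.Icc (0 : ℝ) 1) (n : ℕ) {a : ℝ} (ha : a ∈ Set.Icc (0 : ℝ) 1)
    {u p : E} (hu : u ∈ C) (hp : p ∈ C) (hpT : ∀ i, 1 ≤ i → T i p = p) :
    ‖(a • u + (1 - a) • Wmap T μ n u) - p‖ ≤ ‖u - p‖ := by
  have hWp : Wmap T μ n p = p := Umap_apply_of_forall_apply_eq hpT n 1 le_rfl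
  calc ‖(a • u + (1 - a) • Wmap T μ n u) - p‖
      = ‖(a • u + (1 - a) • Wmap T μ n u) - (a • p + (1 - a) • Wmap T μ n p)‖ := by
        rw [hWp, Convex.combo_self (add_sub_cancel _ _)]
    _ ≤ a * ‖u - p‖ + (1 - a) * ‖Wmap T μ n u - Wmap T μ n p‖ :=
        norm_combo_sub_combo_le ha _ _ _ _
    _ ≤ a * ‖u - p‖ + (1 - a) * ‖u - p‖ := by
        gcongr
        · exact sub_nonneg.2 ha.2
        · exact Umap_nonexpansive hC hTC hT hμ n 1 le_rfl hu hp
    _ = ‖u - p‖ := by ring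

end Normed

section Hilbert

variable {H : Type*} [NormedAddCommGroup H] [InnerProductSpace ℝ H]

lemma norm_le_of_sq_le_inner {a b : H} (h : ‖a‖ ^ 2 ≤ ⟪a, b⟫) : ‖a‖ ≤ ‖b‖ := by
  have := h.trans (real_inner_le_norm a b)
  nlinarith [norm_nonneg a, norm_nonneg b]

lemma norm_sub_smul_sub_le {C : Set H} {B : H → H} {α : ℝ}
    (hB : ∀ u ∈ C, ∀ v ∈ C, α * ‖B u - B v‖ ^ 2 ≤ ⟪B u - B v, u - v⟫)
    {u v : H} (hu : u ∈ C) (hv : v ∈ C) {t : ℝ} (ht : t ∈ Set.Icc 0 (2 * α)) :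
    ‖(u - t • B u) - (v - t • B v)‖ ≤ ‖u - v‖ := by
  have e : (u - t • B u) - (v - t • B v) = (u - v) - t • (B u - B v) := by module
  refine pow_le_pow_iff_left₀ (norm_nonneg _) (norm_nonneg _) two_ne_zero |>.1 ?_
  rw [e, norm_sub_sq_real, real_inner_smul_right, norm_smul_of_nonneg ht.1,
    real_inner_comm]
  have := hB u hu v hv
  nlinarith [mul_le_mul_of_nonneg_right ht.2 (sq_nonneg ‖B u - B v‖), ht.1]

def IsMetricProj (C : Set H) (P : H → H) : Prop :=
  ∀ x, P x ∈ C ∧ ∀ y ∈ C, ‖x - P x‖ ≤ ‖x - y‖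

section Projection

variable {C : Set H} {PC : H → H}

lemma inner_sub_proj_le_zero (hC : Convex ℝ C) (hPC : IsMetricProj C PC) (x : H) {y : H}
    (hy : y ∈ C) :
    ⟪x - PC x, y - PC x⟫ ≤ 0 := by
  have : Nonempty C := ⟨⟨PC x, (hPC x).1⟩⟩
  refine (norm_eq_iInf_iff_real_inner_le_zero hC (hPC x).1).1 (le_antisymm ?_ ?_) y hy
  · exact le_ciInf fun w => (hPC x).2 w w.2
  · exact ciInf_le ⟨0, by rintro r ⟨w, rfl⟩; positivity⟩ (⟨PC x, (hPC x).1⟩ : C)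

lemma proj_eq_of_inner_le_zero (hC : Convex ℝ C) (hPC : IsMetricProj C PC) {x q : H}
    (hq : q ∈ C) (h : ∀ y ∈ C, ⟪x - q, y - q⟫ ≤ 0) : PC x = q := by
  have h₁ := inner_sub_proj_le_zero hC hPC x hq
  have h₂ := h (PC x) (hPC x).1
  have e : ‖q - PC x‖ ^ 2 = ⟪x - PC x, q - PC x⟫ + ⟪x - q, PC x - q⟫ := by
    rw [← real_inner_self_eq_norm_sq]
    simp only [inner_sub_left, inner_sub_right, real_inner_comm]
    ring
  have : ‖q - PC x‖ = 0 := by nlinarith [norm_nonneg (q - PC x)]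
  exact (sub_eq_zero.1 (norm_eq_zero.1 this)).symm

lemma norm_proj_sub_proj_le (hC : Convex ℝ C) (hPC : IsMetricProj C PC) (a b : H) :
    ‖PC a - PC b‖ ≤ ‖a - b‖ := by
  refine norm_le_of_sq_le_inner ?_
  have h₁ := inner_sub_proj_le_zero hC hPC a (hPC b).1
  have h₂ := inner_sub_proj_le_zero hC hPC b (hPC a).1
  have e : ⟪PC a - PC b, a - b⟫
      = ‖PC a - PC b‖ ^ 2 - ⟪a - PC a, PC b - PC a⟫ - ⟪b - PC b, PC a - PC b⟫ := by
    rw [← real_inner_self_eq_norm_sq]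
    simp only [inner_sub_left, inner_sub_right, real_inner_comm]
    ring
  linarith

lemma proj_sub_smul_eq_self (hC : Convex ℝ C) (hPC : IsMetricProj C PC) {B : H → H} {p : H}
    (hp : p ∈ C) (hVI : ∀ v ∈ C, 0 ≤ ⟪B p, v - p⟫) {t : ℝ} (ht : 0 ≤ t) :
    PC (p - t • B p) = p := by
  refine proj_eq_of_inner_le_zero hC hPC hp fun y hy => ?_
  rw [sub_sub_cancel_left, inner_neg_left, real_inner_smul_left]
  nlinarith [hVI y hy]

lemma norm_proj_sub_smul_sub_le (hC : Convex ℝ C) (hPC : IsMetricProj C PC) {B : H → H}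
    {α : ℝ} (hB : ∀ u ∈ C, ∀ v ∈ C, α * ‖B u - B v‖ ^ 2 ≤ ⟪B u - B v, u - v⟫)
    {z p : H} (hz : z ∈ C) (hp : p ∈ C) (hVI : ∀ v ∈ C, 0 ≤ ⟪B p, v - p⟫)
    {t : ℝ} (ht : t ∈ Set.Icc 0 (2 * α)) : ‖PC (z - t • B z) - p‖ ≤ ‖z - p‖ := by
  nth_rewrite 1 [← proj_sub_smul_eq_self hC hPC hp hVI ht.1]
  exact (norm_proj_sub_proj_le hC hPC _ _).trans (norm_sub_smul_sub_le hB hz hp ht)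

end Projection

lemma norm_resolvent_sub_le {C : Set H} {F : H → H → ℝ}
    (hF : ∀ x ∈ C, ∀ y ∈ C, F x y + F y x ≤ 0) {r : ℝ} (hr : 0 < r) {x u p : H}
    (hu : u ∈ C) (hres : ∀ w ∈ C, 0 ≤ F u w + (1 / r) * ⟪w - u, u - x⟫)
    (hp : p ∈ C) (hEP : ∀ y ∈ C, 0 ≤ F p y) : ‖u - p‖ ≤ ‖x - p‖ := by
  have hinner : 0 ≤ ⟪p - u, u - x⟫ := by
    have := hres p hp
    have := hEP u hu
    have := hF u hu p hp
    exact nonneg_of_mul_nonneg_right (by linarith) (one_div_pos.2 hr)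
  refine norm_le_of_sq_le_inner ?_
  have e : ⟪u - p, x - p⟫ = ‖u - p‖ ^ 2 + ⟪p - u, u - x⟫ := by
    rw [← real_inner_self_eq_norm_sq]
    simp only [inner_sub_left, inner_sub_right, real_inner_comm]
    ring
  linarith

lemma inner_apply_self_le_opNorm_mul_sq (A : H →L[ℝ] H) (x : H) :
    ⟪A x, x⟫ ≤ ‖A‖ * ‖x‖ ^ 2 :=
  calc ⟪A x, x⟫ ≤ ‖A x‖ * ‖x‖ := real_inner_le_norm _ _
    _ ≤ ‖A‖ * ‖x‖ * ‖x‖ := by gcongr; exact A.le_opNorm x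
    _ = ‖A‖ * ‖x‖ ^ 2 := by ring

section StronglyPositive

variable {A : H →L[ℝ] H} {γbar : ℝ}

lemma opNorm_le_of_abs_inner_le {S : H →L[ℝ] H} (hS : (S : H →ₗ[ℝ] H).IsSymmetric) {c : ℝ}
    (hc : 0 ≤ c) (h : ∀ x, |⟪S x, x⟫| ≤ c * ‖x‖ ^ 2) : ‖S‖ ≤ c := by
  rw [S.norm_eq_iSup_rayleighQuotient hS]
  refine ciSup_le fun x => ?_
  rw [ContinuousLinearMap.rayleighQuotient, ContinuousLinearMap.reApplyInnerSelf_apply,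
    RCLike.re_to_real, abs_div, abs_sq]
  rcases eq_or_ne x 0 with rfl | hx
  · simpa using hc
  · exact div_le_of_le_mul₀ (sq_nonneg _) hc (h x)

lemma le_opNorm_of_le_inner [Nontrivial H] (hA : ∀ x, γbar * ‖x‖ ^ 2 ≤ ⟪A x, x⟫) :
    γbar ≤ ‖A‖ := by
  obtain ⟨x, hx⟩ := exists_ne (0 : H)
  exact le_of_mul_le_mul_right ((hA x).trans (inner_apply_self_le_opNorm_mul_sq A x))
    (by positivity)

lemma mul_opNorm_le_one {β : ℝ} (hβ : β ≤ ‖A‖⁻¹) : ‖A‖ * β ≤ 1 :=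
  mul_le_of_le_inv_mul₀ zero_le_one (norm_nonneg A) (by rwa [mul_one])

lemma mul_le_one_of_le_inv_opNorm (hA : ∀ x, γbar * ‖x‖ ^ 2 ≤ ⟪A x, x⟫) {β : ℝ}
    (hβ₀ : 0 ≤ β) (hβ : β ≤ ‖A‖⁻¹) : β * γbar ≤ 1 := by
  rcases subsingleton_or_nontrivial H with _ | _
  -- On the trivial space `‖A‖⁻¹ = 0⁻¹ = 0`, which forces `β = 0`.
  · have : β = 0 := le_antisymm (by simpa [Subsingleton.elim A 0] using hβ) hβ₀
    simp [this]
  · calc β * γbar ≤ β * ‖A‖ := by gcongr; exact le_opNorm_of_le_inner hA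
      _ ≤ 1 := by rw [mul_comm]; exact mul_opNorm_le_one hβ

lemma norm_sub_smul_apply_le (hAsymm : (A : H →ₗ[ℝ] H).IsSymmetric)
    (hA : ∀ x, γbar * ‖x‖ ^ 2 ≤ ⟪A x, x⟫) {β : ℝ} (hβ₀ : 0 ≤ β) (hβ : β ≤ ‖A‖⁻¹) (x : H) :
    ‖x - β • A x‖ ≤ (1 - β * γbar) * ‖x‖ := by
  set S : H →L[ℝ] H := ContinuousLinearMap.id ℝ H - β • A
  have hSsymm : (S : H →ₗ[ℝ] H).IsSymmetric := fun u v => by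
    have h := hAsymm u v
    simp only [ContinuousLinearMap.coe_coe] at h
    simp [S, inner_sub_left, inner_sub_right, real_inner_smul_left, real_inner_smul_right, h]
  have hSx : ∀ v, ⟪S v, v⟫ = ‖v‖ ^ 2 - β * ⟪A v, v⟫ := fun v => by
    simp [S, inner_sub_left, real_inner_smul_left]
  have hβγ := mul_le_one_of_le_inv_opNorm hA hβ₀ hβ
  have hS : ‖S‖ ≤ 1 - β * γbar := by
    refine opNorm_le_of_abs_inner_le hSsymm (sub_nonneg.2 hβγ) fun v => abs_le.2 ⟨?_, ?_⟩
    · have h₁ := mul_le_mul_of_nonneg_left (inner_apply_self_le_opNorm_mul_sq A v) hβ₀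
      have h₂ := mul_le_mul_of_nonneg_right (mul_opNorm_le_one hβ) (sq_nonneg ‖v‖)
      rw [hSx]
      nlinarith [mul_le_mul_of_nonneg_right (sub_nonneg.2 hβγ) (sq_nonneg ‖v‖)]
    · rw [hSx]
      nlinarith [mul_le_mul_of_nonneg_left (hA v) hβ₀]
  calc ‖x - β • A x‖ = ‖S x‖ := rfl
    _ ≤ ‖S‖ * ‖x‖ := S.le_opNorm x
    _ ≤ (1 - β * γbar) * ‖x‖ := by gcongr

lemma norm_viscosity_sub_le (hAsymm : (A : H →ₗ[ℝ] H).IsSymmetric)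
    (hA : ∀ x, γbar * ‖x‖ ^ 2 ≤ ⟪A x, x⟫) {f : H → H} {ρ : ℝ} (hρ : 0 ≤ ρ)
    (hf : ∀ x y, ‖f x - f y‖ ≤ ρ * ‖x - y‖) {γ : ℝ} (hγ : 0 ≤ γ) (hγρ : γ * ρ < γbar)
    {β : ℝ} (hβ₀ : 0 ≤ β) (hβ : β ≤ ‖A‖⁻¹) {w t p : H} {d : ℝ}
    (hw : ‖w - p‖ ≤ d) (ht : ‖t - p‖ ≤ d) :
    ‖β • (γ • f w) + (t - β • A t) - p‖
      ≤ (1 - β * (γbar - γ * ρ)) * d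
        + β * (γbar - γ * ρ) * (‖γ • f p - A p‖ / (γbar - γ * ρ)) := by
  have e : β • (γ • f w) + (t - β • A t) - p
      = (β * γ) • (f w - f p) + β • (γ • f p - A p) + ((t - p) - β • A (t - p)) := by
    rw [map_sub]; module
  have hd : 0 ≤ d := (norm_nonneg _).trans hw
  have h₁ : ‖(β * γ) • (f w - f p)‖ ≤ β * γ * ρ * d :=
    calc ‖(β * γ) • (f w - f p)‖ = β * γ * ‖f w - f p‖ :=
          norm_smul_of_nonneg (by positivity) _
      _ ≤ β * γ * (ρ * d) := by gcongr; exact (hf w p).trans (by gcongr)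
      _ = β * γ * ρ * d := by ring
  have h₂ : ‖(t - p) - β • A (t - p)‖ ≤ (1 - β * γbar) * d :=
    (norm_sub_smul_apply_le hAsymm hA hβ₀ hβ _).trans
      (by gcongr; exact sub_nonneg.2 (mul_le_one_of_le_inv_opNorm hA hβ₀ hβ))
  have h₃ : β * (γbar - γ * ρ) * (‖γ • f p - A p‖ / (γbar - γ * ρ))
      = ‖β • (γ • f p - A p)‖ := by
    rw [norm_smul_of_nonneg hβ₀]
    field_simp [(sub_pos.2 hγρ).ne']
  rw [e, h₃]
  calc _ ≤ ‖(β * γ) • (f w - f p)‖ + ‖β • (γ • f p - A p)‖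
          + ‖(t - p) - β • A (t - p)‖ := norm_add₃_le
    _ ≤ _ := by linarith

end StronglyPositive

end Hilbert

lemma isBounded_image_of_norm_sub_le {E ι : Type*} [SeminormedAddCommGroup E] {g : ι → E}
    {s : Set ι} (p : E) {R : ℝ} (h : ∀ n ∈ s, ‖g n - p‖ ≤ R) :
    Bornology.IsBounded (g '' s) :=
  (Metric.isBounded_closedBall (x := p) (r := R)).subset <| by
    rintro _ ⟨n, hn, rfl⟩
    simpa [dist_eq_norm] using h n hn

lemma le_max_of_convex_recursion {a b c s : ℕ → ℝ} {K : ℝ}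
    (hc : ∀ n, c n ∈ Set.Icc (0 : ℝ) 1) (hs : ∀ n, s n ∈ Set.Icc (0 : ℝ) 1)
    (ha : ∀ n, 1 ≤ n → a (n + 1) ≤ c n * a n + (1 - c n) * b n)
    (hb : ∀ n, 1 ≤ n → b n ≤ (1 - s n) * a n + s n * K) :
    ∀ n, 1 ≤ n → a n ≤ max (a 1) K ∧ b n ≤ max (a 1) K := by
  have hbM : ∀ n, 1 ≤ n → a n ≤ max (a 1) K → b n ≤ max (a 1) K := fun n hn ih => by
    obtain ⟨hs₀, hs₁⟩ := hs n
    calc b n ≤ (1 - s n) * a n + s n * K := hb n hn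
      _ ≤ (1 - s n) * max (a 1) K + s n * max (a 1) K := by
          gcongr
          exact le_max_right _ _
      _ = max (a 1) K := by ring
  have haM : ∀ n, 1 ≤ n → a n ≤ max (a 1) K := by
    refine Nat.le_induction (le_max_left _ _) fun n hn ih => ?_
    obtain ⟨hc₀, hc₁⟩ := hc n
    calc a (n + 1) ≤ c n * a n + (1 - c n) * b n := ha n hn
      _ ≤ c n * max (a 1) K + (1 - c n) * max (a 1) K := by
          gcongr
          exact hbM n hn ih
      _ = max (a 1) K := by ring
  exact fun n hn => ⟨haM n hn, hbM n hn (haM n hn)⟩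

theorem stmt_18_general {H : Type*} [NormedAddCommGroup H] [InnerProductSpace ℝ H]
    (C : Set H) (hCcv : Convex ℝ C)
    -- the bifunction F satisfying (A1)-(A4)
    (F : H → H → ℝ)
    (hF2 : ∀ x ∈ C, ∀ y ∈ C, F x y + F y x ≤ 0)
    -- B an α-inverse-strongly monotone mapping of C into H
    (B : H → H) (α : ℝ)
    (hB : ∀ u ∈ C, ∀ v ∈ C, α * ‖B u - B v‖ ^ 2 ≤ ⟪B u - B v, u - v⟫)
    -- the infinite family of nonexpansive self-maps of C
    (T : ℕ → H → H)
    (hTmaps : ∀ i, 1 ≤ i → Set.MapsTo (T i) C C)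
    (hTne : ∀ i, 1 ≤ i → ∀ x ∈ C, ∀ y ∈ C, ‖T i x - T i y‖ ≤ ‖x - y‖)
    -- the parameters of the W-mappings
    (μ : ℕ → ℝ) (μbar : ℝ) (hμbar : μbar < 1)
    (hμ : ∀ i, 1 ≤ i → 0 < μ i ∧ μ i ≤ μbar)
    -- A strongly positive bounded linear self-adjoint
    (A : H →L[ℝ] H) (hAsa : ∀ x y : H, ⟪A x, y⟫ = ⟪x, A y⟫)
    (γbar : ℝ)
    (hApos : ∀ x : H, γbar * ‖x‖ ^ 2 ≤ ⟪A x, x⟫)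
    -- f a ρ-contraction, γ > 0 with γρ < γbar
    (f : H → H) (ρ : ℝ) (hρ : ρ ∈ Set.Ioo (0 : ℝ) 1)
    (hf : ∀ x y : H, ‖f x - f y‖ ≤ ρ * ‖x - y‖)
    (γ : ℝ) (hγ : 0 < γ) (hγρ : γ * ρ < γbar)
    -- the metric projection onto C
    (PC : H → H)
    (hPC : ∀ x : H, PC x ∈ C ∧ ∀ y ∈ C, ‖x - PC x‖ ≤ ‖x - y‖)
    -- the solution set 𝔽 = (⋂ᵢ Fix Tᵢ) ∩ VI(B,C) ∩ EP(F), assumed nonempty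
    (Fset : Set H)
    (hFset : Fset = ({x : H | x ∈ C ∧ ∀ i, 1 ≤ i → T i x = x}
        ∩ {u : H | u ∈ C ∧ ∀ v ∈ C, 0 ≤ ⟪B u, v - u⟫}
        ∩ {x : H | x ∈ C ∧ ∀ y ∈ C, 0 ≤ F x y}))
    (hFne : Fset.Nonempty)
    -- the parameter sequences
    (αs βs lams γs rs : ℕ → ℝ)
    (hαs : ∀ n, αs n ∈ Set.Icc (0 : ℝ) 1)
    (hβs : ∀ n, βs n ∈ Set.Icc (0 : ℝ) 1)
    (hβsA : ∀ n, βs n ≤ ‖A‖⁻¹)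
    (hlams : ∀ n, lams n ∈ Set.Icc (0 : ℝ) 1)
    (hγs : ∀ n, γs n ∈ Set.Ioo 0 (2 * α))
    (hrs : ∀ n, 0 < rs n)
    -- the iteration
    (x u z y : ℕ → H)
    (hu : ∀ n, 1 ≤ n → u n ∈ C ∧
      ∀ w ∈ C, 0 ≤ F (u n) w + (1 / rs n) * ⟪w - u n, u n - x n⟫)
    (hz : ∀ n, 1 ≤ n → z n = lams n • u n + (1 - lams n) • Wmap T μ n (u n))
    (hy : ∀ n, 1 ≤ n → y n
      = βs n • (γ • f (z n))
        + (PC (z n - γs n • B (z n)) - βs n • A (PC (z n - γs n • B (z n)))))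
    (hx : ∀ n, 1 ≤ n → x (n + 1) = αs n • x n + (1 - αs n) • y n) :
    (∀ p ∈ Fset, ∀ n, 1 ≤ n →
      ‖x n - p‖ ≤ max ‖x 1 - p‖ (‖γ • f p - A p‖ / (γbar - γ * ρ))) ∧
    Bornology.IsBounded (x '' Set.Ici 1) ∧
    Bornology.IsBounded (u '' Set.Ici 1) ∧
    Bornology.IsBounded (z '' Set.Ici 1) ∧
    Bornology.IsBounded (y '' Set.Ici 1) := by
  have hΔ : 0 < γbar - γ * ρ := sub_pos.2 hγρ
  have hμ' : ∀ i, 1 ≤ i → μ i ∈ Set.Icc (0 : ℝ) 1 :=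
    fun i hi => ⟨(hμ i hi).1.le, (hμ i hi).2.trans hμbar.le⟩
  have estimates : ∀ p ∈ Fset, ∀ n, 1 ≤ n →
      ‖u n - p‖ ≤ ‖x n - p‖ ∧ ‖z n - p‖ ≤ ‖x n - p‖ ∧
      ‖y n - p‖ ≤ (1 - βs n * (γbar - γ * ρ)) * ‖x n - p‖
        + βs n * (γbar - γ * ρ) * (‖γ • f p - A p‖ / (γbar - γ * ρ)) := by
    intro p hp n hn
    rw [hFset] at hp
    obtain ⟨⟨⟨hpC, hpT⟩, -, hpVI⟩, -, hpEP⟩ := hp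
    obtain ⟨huC, hres⟩ := hu n hn
    have hux := norm_resolvent_sub_le hF2 (hrs n) huC hres hpC hpEP
    have hzC : z n ∈ C := hz n hn ▸ combo_Wmap_mem hCcv hTmaps hμ' n (hlams n) huC
    have hzx : ‖z n - p‖ ≤ ‖x n - p‖ :=
      (hz n hn ▸ norm_combo_Wmap_sub_le hCcv hTmaps hTne hμ' n (hlams n) huC hpC hpT).trans hux
    have htx := (norm_proj_sub_smul_sub_le hCcv hPC hB hzC hpC hpVI
      ⟨(hγs n).1.le, (hγs n).2.le⟩).trans hzx
    exact ⟨hux, hzx, hy n hn ▸ norm_viscosity_sub_le hAsa hApos hρ.1.le hf hγ.le hγρ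
      (hβs n).1 (hβsA n) hzx htx⟩
  have bounds : ∀ p ∈ Fset, ∀ n, 1 ≤ n →
      ‖x n - p‖ ≤ max ‖x 1 - p‖ (‖γ • f p - A p‖ / (γbar - γ * ρ)) ∧
      ‖y n - p‖ ≤ max ‖x 1 - p‖ (‖γ • f p - A p‖ / (γbar - γ * ρ)) := by
    refine fun p hp => le_max_of_convex_recursion hαs
      (fun n => ⟨mul_nonneg (hβs n).1 hΔ.le, ?_⟩)
      (fun n hn => hx n hn ▸ norm_combo_sub_le (hαs n) _ _ _)
      (fun n hn => (estimates p hp n hn).2.2)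
    have := mul_le_one_of_le_inv_opNorm hApos (hβs n).1 (hβsA n)
    nlinarith [(hβs n).1, mul_nonneg hγ.le hρ.1.le]
  obtain ⟨p, hp⟩ := hFne
  refine ⟨fun q hq n hn => (bounds q hq n hn).1, ?_, ?_, ?_, ?_⟩ <;>
    refine isBounded_image_of_norm_sub_le p
      (R := max ‖x 1 - p‖ (‖γ • f p - A p‖ / (γbar - γ * ρ))) fun n hn => ?_
  · exact (bounds p hp n hn).1
  · exact (estimates p hp n hn).1.trans (bounds p hp n hn).1
  · exact (estimates p hp n hn).2.1.trans (bounds p hp n hn).1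
  · exact (bounds p hp n hn).2

/-- **Boundedness of the iterates of the main iteration.**  Under the
hypotheses of the main theorem (with `β n ≤ ‖A‖⁻¹`), the iterates satisfy
`‖x n - p‖ ≤ max {‖x 1 - p‖, ‖γ f p - A p‖ / (γbar - γρ)}` for every `p ∈ 𝔽`
and `n ≥ 1`; in particular the sequences `x`, `u`, `z`, `y` are bounded. -/
theorem stmt_18 {H : Type*} [NormedAddCommGroup H] [InnerProductSpace ℝ H]
    [CompleteSpace H]
    (C : Set H) (hCne : C.Nonempty) (hCcl : IsClosed C) (hCcv : Convex ℝ C)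
    -- the bifunction F satisfying (A1)-(A4)
    (F : H → H → ℝ)
    (hF1 : ∀ x ∈ C, F x x = 0)
    (hF2 : ∀ x ∈ C, ∀ y ∈ C, F x y + F y x ≤ 0)
    (hF3 : ∀ x ∈ C, ∀ y ∈ C, ∀ z ∈ C,
      limsup (fun t : ℝ => F (t • z + (1 - t) • x) y) (𝓝[>] 0) ≤ F x y)
    (hF4 : ∀ x ∈ C, ConvexOn ℝ C (fun y => F x y)
      ∧ LowerSemicontinuousOn (fun y => F x y) C)
    -- B an α-inverse-strongly monotone mapping of C into H
    (B : H → H) (α : ℝ) (hα : 0 < α)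
    (hB : ∀ u ∈ C, ∀ v ∈ C, α * ‖B u - B v‖ ^ 2 ≤ ⟪B u - B v, u - v⟫)
    -- the infinite family of nonexpansive self-maps of C
    (T : ℕ → H → H)
    (hTmaps : ∀ i, 1 ≤ i → Set.MapsTo (T i) C C)
    (hTne : ∀ i, 1 ≤ i → ∀ x ∈ C, ∀ y ∈ C, ‖T i x - T i y‖ ≤ ‖x - y‖)
    -- the parameters of the W-mappings
    (μ : ℕ → ℝ) (μbar : ℝ) (hμbar : μbar < 1)
    (hμ : ∀ i, 1 ≤ i → 0 < μ i ∧ μ i ≤ μbar)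
    -- A strongly positive bounded linear self-adjoint
    (A : H →L[ℝ] H) (hAsa : ∀ x y : H, ⟪A x, y⟫ = ⟪x, A y⟫)
    (γbar : ℝ) (hγbar : 0 < γbar)
    (hApos : ∀ x : H, γbar * ‖x‖ ^ 2 ≤ ⟪A x, x⟫)
    -- f a ρ-contraction, γ > 0 with γρ < γbar
    (f : H → H) (ρ : ℝ) (hρ : ρ ∈ Set.Ioo (0 : ℝ) 1)
    (hf : ∀ x y : H, ‖f x - f y‖ ≤ ρ * ‖x - y‖)
    (γ : ℝ) (hγ : 0 < γ) (hγρ : γ * ρ < γbar)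
    -- the metric projection onto C
    (PC : H → H)
    (hPC : ∀ x : H, PC x ∈ C ∧ ∀ y ∈ C, ‖x - PC x‖ ≤ ‖x - y‖)
    -- the solution set 𝔽 = (⋂ᵢ Fix Tᵢ) ∩ VI(B,C) ∩ EP(F), assumed nonempty
    (Fset : Set H)
    (hFset : Fset = ({x : H | x ∈ C ∧ ∀ i, 1 ≤ i → T i x = x}
        ∩ {u : H | u ∈ C ∧ ∀ v ∈ C, 0 ≤ ⟪B u, v - u⟫}
        ∩ {x : H | x ∈ C ∧ ∀ y ∈ C, 0 ≤ F x y}))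
    (hFne : Fset.Nonempty)
    -- the parameter sequences
    (αs βs lams γs rs : ℕ → ℝ)
    (hαs : ∀ n, αs n ∈ Set.Icc (0 : ℝ) 1)
    (hβs : ∀ n, βs n ∈ Set.Icc (0 : ℝ) 1)
    (hβsA : ∀ n, βs n ≤ ‖A‖⁻¹)
    (hlams : ∀ n, lams n ∈ Set.Icc (0 : ℝ) 1)
    (hγs : ∀ n, γs n ∈ Set.Ioo 0 (2 * α))
    (hrs : ∀ n, 0 < rs n)
    -- the iteration
    (x u z y : ℕ → H)
    (hx1 : x 1 ∈ C)
    (hu : ∀ n, 1 ≤ n → u n ∈ C ∧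
      ∀ w ∈ C, 0 ≤ F (u n) w + (1 / rs n) * ⟪w - u n, u n - x n⟫)
    (hz : ∀ n, 1 ≤ n → z n = lams n • u n + (1 - lams n) • Wmap T μ n (u n))
    (hy : ∀ n, 1 ≤ n → y n
      = βs n • (γ • f (z n))
        + (PC (z n - γs n • B (z n)) - βs n • A (PC (z n - γs n • B (z n)))))
    (hx : ∀ n, 1 ≤ n → x (n + 1) = αs n • x n + (1 - αs n) • y n) :
    (∀ p ∈ Fset, ∀ n, 1 ≤ n →
      ‖x n - p‖ ≤ max ‖x 1 - p‖ (‖γ • f p - A p‖ / (γbar - γ * ρ))) ∧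
    Bornology.IsBounded (x '' Set.Ici 1) ∧
    Bornology.IsBounded (u '' Set.Ici 1) ∧
    Bornology.IsBounded (z '' Set.Ici 1) ∧
    Bornology.IsBounded (y '' Set.Ici 1) :=
  stmt_18_general C hCcv F hF2 B α hB T hTmaps hTne μ μbar hμbar hμ A hAsa γbar hApos f ρ hρ hf γ hγ
    hγρ PC hPC Fset hFset hFne αs βs lams γs rs hαs hβs hβsA hlams hγs hrs x u z y hu hz hy hx
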